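/- Let the setup of the trace polynomials be as given, with r ≥ 3, integers 2 ≤ k < r and t ≥ 2, vectors a_1, …, a_l associated to the k-element subsets B_1, …, B_l of {1,…,r} containing 1, and f_i := Tr_{a_i}. Write a_1 = (b_1, …, b_r) with b_1 = t and b_j ∈ {0,1} for j ≥ 2, and let g be the monomial x_1^{b_1} x_2^{b_2} ⋯ x_r^{b_r} = x_1^{t} · ∏_{j ∈ B_1, j ≠ 1} x_j. Then the monomial g appears with nonzero coefficient in f_1 = Tr_{a_1}, but g does not lie in the support of f_i = Tr_{a_i} for any i ∈ {2, …, l}. -/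

import Mathlib

/-!
Formalization of the key support computation in the proof of the linear-independence
proposition from "Upper bounds for the number of number fields with prescribed Galois group"
by Mishra and Ray.
-/

open MvPolynomial

/-- The trace polynomial `Tr_a(x_1,…,x_n) = Σ_{i=1}^n Π_{j=1}^r x_{π_j(i)}^{a_j}`. -/
noncomputable def tracePoly {n r : ℕ} (π : Fin r → Equiv.Perm (Fin n)) (a : Fin r → ℕ) :
    MvPolynomial (Fin n) ℤ :=
  ∑ i : Fin n, ∏ j : Fin r, (X (π j i) : MvPolynomial (Fin n) ℤ) ^ a j

/-- The vector `a(B)` associated to a subset `B ⊆ {1,…,r}` containing `1` (here the point `0`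
of `Fin r`). -/
def aVec {r : ℕ} (h0 : 0 < r) (t : ℕ) (B : Finset (Fin r)) : Fin r → ℕ :=
  fun i => if i = ⟨0, h0⟩ then t else if i ∈ B then 1 else 0

lemma prodXpow {n r : ℕ} (σ : Fin r → Fin n) (a : Fin r → ℕ) :
    ∏ j : Fin r, (X (σ j) : MvPolynomial (Fin n) ℤ) ^ a j
      = monomial (∑ j : Fin r, Finsupp.single (σ j) (a j)) 1 := by
  rw [monomial_sum_one]
  simp [X_pow_eq_monomial]

lemma coeff_tracePoly {n r : ℕ} (π : Fin r → Equiv.Perm (Fin n)) (a : Fin r → ℕ)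
    (d : Fin n →₀ ℕ) :
    coeff d (tracePoly π a)
      = ∑ s : Fin n, if (∑ j : Fin r, Finsupp.single (π j s) (a j)) = d then 1 else 0 := by
  rw [tracePoly, coeff_sum]
  refine Finset.sum_congr rfl fun s _ => ?_
  rw [prodXpow, coeff_monomial]

lemma sum_single_apply_of_inj {n r : ℕ} {σ : Fin r → Fin n} (hσ : Function.Injective σ)
    (a : Fin r → ℕ) (j' : Fin r) :
    (∑ j : Fin r, Finsupp.single (σ j) (a j)) (σ j') = a j' := by
  rw [Finset.sum_apply']
  simp only [Finsupp.single_apply, hσ.eq_iff]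
  simp

lemma sum_single_apply_of_not {n r : ℕ} (σ : Fin r → Fin n)
    (a : Fin r → ℕ) (p : Fin n) (h : ∀ j, σ j ≠ p) :
    (∑ j : Fin r, Finsupp.single (σ j) (a j)) p = 0 := by
  rw [Finset.sum_apply']
  simp only [Finsupp.single_apply]
  exact Finset.sum_eq_zero fun j _ => if_neg (h j)

/-- **Lemma.** In the setting of the trace polynomials (finite group `G`, subgroup `H` of
index `n`, normalizer `N`, `r = [N:H] ≥ 3`, coset representatives `g_1,…,g_n` with `g_1 = 1`
and `g_1,…,g_r ∈ N` representing `N/H`, permutations `π_j` with `g_i g_j H = g_{π_j(i)} H`,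
integers `2 ≤ k < r`, `t ≥ 2`, and vectors `a_1,…,a_l` enumerated by the `k`-element subsets
`B_1,…,B_l` of `{1,…,r}` containing `1`), the monomial
`g = x_1^t · Π_{j ∈ B_1, j ≠ 1} x_j` lies in the support of `f_1 = Tr_{a_1}`, but not in the
support of `f_i = Tr_{a_i}` for any `i ≥ 2`. -/
theorem statement9
    (G : Type*) [Group G] [Finite G]
    (H : Subgroup G)
    (n : ℕ) (hn : 0 < n) (hidx : H.index = n)
    (r : ℕ) (hr3 : 3 ≤ r) (hrn : r ≤ n)
    (g : Fin n → G) (hg1 : g ⟨0, hn⟩ = 1)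
    (hreps : ∀ x : G, ∃! i : Fin n, x⁻¹ * g i ∈ H)
    (hgN : ∀ i : Fin n, (i : ℕ) < r → g i ∈ Subgroup.normalizer (H : Set G))
    (hNreps : ∀ x ∈ Subgroup.normalizer (H : Set G), ∃! i : Fin n, (i : ℕ) < r ∧ x⁻¹ * g i ∈ H)
    (π : Fin r → Equiv.Perm (Fin n))
    (hπ : ∀ (j : Fin r) (i : Fin n),
      (g (π j i))⁻¹ * (g i * g (Fin.castLE hrn j)) ∈ H)
    (k t : ℕ) (hk2 : 2 ≤ k) (hkr : k < r) (ht : 2 ≤ t)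
    (l : ℕ) (hl : l = Nat.choose (r - 1) (k - 1))
    (B : Fin l → Finset (Fin r)) (hBinj : Function.Injective B)
    (hBmem : ∀ i : Fin l, (⟨0, by omega⟩ : Fin r) ∈ B i ∧ (B i).card = k)
    (i₀ : Fin l) (hi₀ : (i₀ : ℕ) = 0)
    (d : Fin n →₀ ℕ)
    (hd : d = ∑ j : Fin r,
      Finsupp.single (Fin.castLE hrn j) (aVec (by omega) t (B i₀) j)) :
    d ∈ (tracePoly π (aVec (by omega) t (B i₀))).support ∧
    ∀ i : Fin l, i ≠ i₀ → d ∉ (tracePoly π (aVec (by omega) t (B i))).support := by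
  have hr0 : 0 < r := by omega
  set j₀ : Fin r := ⟨0, hr0⟩ with hj₀
  have hcast_inj : Function.Injective (Fin.castLE hrn) := Fin.castLE_injective hrn
  have hcastj₀ : Fin.castLE hrn j₀ = (⟨0, hn⟩ : Fin n) := rfl
  -- F1 : π j 0 = castLE j
  have F1 : ∀ j : Fin r, π j ⟨0, hn⟩ = Fin.castLE hrn j := by
    intro j
    obtain ⟨i, -, huniq⟩ := hreps (g (Fin.castLE hrn j))
    have h1 : (g (Fin.castLE hrn j))⁻¹ * g (π j ⟨0, hn⟩) ∈ H := by
      have h := hπ j ⟨0, hn⟩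
      rw [hg1, one_mul] at h
      have := H.inv_mem h
      simpa [mul_inv_rev] using this
    have h2 : (g (Fin.castLE hrn j))⁻¹ * g (Fin.castLE hrn j) ∈ H := by
      simp [H.one_mem]
    exact (huniq _ h1).trans (huniq _ h2).symm
  -- F2 : injectivity of j ↦ π j s
  have F2 : ∀ s : Fin n, Function.Injective (fun j : Fin r => π j s) := by
    intro s j j' hjj'
    simp only at hjj'
    have u := hπ j s
    have v := hπ j' s
    rw [hjj'] at u
    have w : (g (Fin.castLE hrn j))⁻¹ * g (Fin.castLE hrn j') ∈ H := by
      have := H.mul_mem (H.inv_mem u) v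
      have e : ((g (π j' s))⁻¹ * (g s * g (Fin.castLE hrn j)))⁻¹ *
          ((g (π j' s))⁻¹ * (g s * g (Fin.castLE hrn j')))
          = (g (Fin.castLE hrn j))⁻¹ * g (Fin.castLE hrn j') := by group
      rwa [e] at this
    obtain ⟨i, -, huniq⟩ := hreps (g (Fin.castLE hrn j))
    have h2 : (g (Fin.castLE hrn j))⁻¹ * g (Fin.castLE hrn j) ∈ H := by
      simp [H.one_mem]
    exact (hcast_inj ((huniq _ w).trans (huniq _ h2).symm)).symm
  -- F3
  have F3 : ∀ s : Fin n, π j₀ s = ⟨0, hn⟩ → s = ⟨0, hn⟩ := by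
    intro s hs
    have h := hπ j₀ s
    rw [hs, hcastj₀, hg1] at h
    obtain ⟨i, -, huniq⟩ := hreps 1
    have h1 : (1 : G)⁻¹ * g s ∈ H := by simpa using h
    have h2 : (1 : G)⁻¹ * g ⟨0, hn⟩ ∈ H := by simp [hg1, H.one_mem]
    exact (huniq _ h1).trans (huniq _ h2).symm
  -- values of d
  have hdval : ∀ j : Fin r, d (Fin.castLE hrn j) = aVec hr0 t (B i₀) j := by
    intro j
    rw [hd]
    exact sum_single_apply_of_inj hcast_inj _ j
  have hd_big : ∀ p : Fin n, 2 ≤ d p → p = (⟨0, hn⟩ : Fin n) := by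
    intro p hp
    by_cases h : (p : ℕ) < r
    · have hpc : p = Fin.castLE hrn ⟨p, h⟩ := by
        apply Fin.ext; rfl
      rw [hpc, hdval] at hp
      by_cases hj : (⟨(p : ℕ), h⟩ : Fin r) = j₀
      · rw [hpc, hj]; exact hcastj₀
      · exfalso
        unfold aVec at hp
        rw [if_neg hj] at hp
        split at hp <;> omega
    · exfalso
      have : d p = 0 := by
        rw [hd]
        refine sum_single_apply_of_not _ _ _ fun j hj => ?_
        apply h
        have hv : (j : ℕ) = (p : ℕ) := by simpa using congrArg Fin.val hj
        have := j.isLt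
        omega
      omega
  -- the monomial map of term s for vector a
  have hm0 : ∀ i : Fin l,
      (∑ j : Fin r, Finsupp.single (π j ⟨0, hn⟩) (aVec hr0 t (B i) j))
        = ∑ j : Fin r, Finsupp.single (Fin.castLE hrn j) (aVec hr0 t (B i) j) :=
    fun i => Finset.sum_congr rfl fun j _ => by rw [F1 j]
  constructor
  · rw [mem_support_iff, coeff_tracePoly]
    intro h0
    have hnn : ∀ s ∈ Finset.univ (α := Fin n),
        (0 : ℤ) ≤ if (∑ j : Fin r, Finsupp.single (π j s) (aVec hr0 t (B i₀) j)) = d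
          then 1 else 0 := by
      intro s _; split <;> norm_num
    have := (Finset.sum_eq_zero_iff_of_nonneg hnn).mp h0 ⟨0, hn⟩ (Finset.mem_univ _)
    rw [if_pos] at this
    · exact one_ne_zero this
    · rw [hm0 i₀, hd]
  · intro i hi
    rw [mem_support_iff, not_not, coeff_tracePoly]
    refine Finset.sum_eq_zero fun s _ => ?_
    rw [if_neg]
    intro hms
    -- evaluate at π j₀ s
    have hval : d (π j₀ s) = t := by
      rw [← hms]
      have := sum_single_apply_of_inj (F2 s) (aVec hr0 t (B i)) j₀
      simpa [aVec, hj₀] using this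
    have hp0 : π j₀ s = (⟨0, hn⟩ : Fin n) := hd_big _ (by omega)
    have hs0 : s = ⟨0, hn⟩ := F3 s hp0
    subst hs0
    rw [hm0 i, hd] at hms
    have heq : ∀ j : Fin r, aVec hr0 t (B i) j = aVec hr0 t (B i₀) j := by
      intro j
      have h1 := sum_single_apply_of_inj hcast_inj (aVec hr0 t (B i)) j
      have h2 := sum_single_apply_of_inj hcast_inj (aVec hr0 t (B i₀)) j
      rw [← h1, ← h2, hms]
    have hBeq : B i = B i₀ := by
      ext j
      by_cases hj : j = j₀
      · subst hj
        exact iff_of_true (hBmem i).1 (hBmem i₀).1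
      · have := heq j
        unfold aVec at this
        rw [if_neg hj, if_neg hj] at this
        constructor <;> intro hmem <;> by_contra hmem' <;>
          simp [hmem, hmem'] at this
    exact hi (hBinj hBeq)
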